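/- arXiv:2101.11264 — 4 statements merged into one kernel-verified Lean document; each statement's English description precedes it below -/
import Mathlib

section
/- Fix an integer m ≥ 1. Define A_0 := Σ_{i=1}^n (x_i + y_i)^m ∈ R and, recursively, A_k := Φ^{k+1}(A_{k−1}) − (k+1)^k · A_{k−1} for 1 ≤ k ≤ m−1. Then for every 0 ≤ k ≤ m−1 one has A_k − Σ_{j=k+1}^m C(m,j) · (Π_{l=2}^{k+1} (l^j − l^{l−1})) · P_{m−j,j} ∈ J, where C(m,j) is the binomial coefficient and the product over an empty range equals 1. In particular, A_{m−1} − (Π_{k=2}^m (k^m − k^{k−1})) · P_{0,m} ∈ J. -/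
/-!
Expanding `(x_i + y_i)^m` binomially gives `A_0 = ∑_j C(m,j) P_{m-j,j}`. Each `P_{a,j}` is an
eigenvector of `Φ^c` with eigenvalue `c^j`, so the recursion multiplies its coefficient in
`A_{k-1}` by `(k+1)^j - (k+1)^k`; hence, exactly,
`A_k = ∑_{j=0}^m C(m,j) (∏_{l=2}^{k+1} (l^j - l^{l-1})) P_{m-j,j}`.
For `1 ≤ j ≤ k` the factor `l = j+1` kills the coefficient, and the `j = 0` term is a multiple
of the power sum `P_{m,0} ∈ J`.
-/

open MvPolynomial

/-- `P n a b = ∑ i, x_i^a * y_i^b` in `R = ℝ[x_1,…,x_n,y_1,…,y_n]`,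
where `x_i = X (Sum.inl i)` and `y_i = X (Sum.inr i)`. -/
noncomputable def P (n : ℕ) (a b : ℕ) : MvPolynomial (Fin n ⊕ Fin n) ℝ :=
  ∑ i : Fin n, X (Sum.inl i) ^ a * X (Sum.inr i) ^ b

/-- The `k`-th power map `Φ^k : R → R`, the ℝ-algebra endomorphism with
`Φ^k(x_i) = x_i` and `Φ^k(y_i) = k·y_i`. -/
noncomputable def Φ (n : ℕ) (k : ℤ) :
    MvPolynomial (Fin n ⊕ Fin n) ℝ →ₐ[ℝ] MvPolynomial (Fin n ⊕ Fin n) ℝ :=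
  aeval (Sum.elim (fun i => X (Sum.inl i)) (fun i => C (k : ℝ) * X (Sum.inr i)))

/-- The ideal `J` generated by the positive-degree symmetric polynomials in the
variables `x_1,…,x_n` alone. -/
noncomputable def Jx (n : ℕ) : Ideal (MvPolynomial (Fin n ⊕ Fin n) ℝ) :=
  Ideal.span
    {f | ∃ g : MvPolynomial (Fin n) ℝ, g.IsSymmetric ∧ 0 < g.totalDegree ∧
      f = rename Sum.inl g}

lemma totalDegree_psum_pos {σ R : Type*} [Fintype σ] [Nonempty σ] [CommSemiring R] [CharZero R]
    {a : ℕ} (ha : a ≠ 0) : 0 < (psum σ R a).totalDegree := by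
  by_contra! h
  have hC := totalDegree_eq_zero_iff_eq_C.mp (Nat.le_zero.mp h)
  -- a constant polynomial takes the same value at `0` and at `1`
  have h0 := congrArg (eval 0) hC
  have h1 := congrArg (eval 1) hC
  simp only [psum, map_sum, map_pow, eval_X, Pi.zero_apply, zero_pow ha, Finset.sum_const_zero,
    eval_C, Pi.one_apply, one_pow, Finset.sum_const, Finset.card_univ, nsmul_eq_mul,
    mul_one] at h0 h1
  rw [← h0] at h1
  exact Fintype.card_ne_zero (Nat.cast_eq_zero.mp h1)

lemma P_mem_Jx (n : ℕ) {a : ℕ} (ha : a ≠ 0) : P n a 0 ∈ Jx n := by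
  rcases Nat.eq_zero_or_pos n with rfl | hn
  · simp [P]
  have : Nonempty (Fin n) := ⟨⟨0, hn⟩⟩
  refine Ideal.subset_span ⟨psum (Fin n) ℝ a, psum_isSymmetric _ _ _, totalDegree_psum_pos ha, ?_⟩
  simp [P, psum]

lemma Φ_P (n : ℕ) (c : ℤ) (a b : ℕ) : Φ n c (P n a b) = ((c : ℝ) ^ b) • P n a b := by
  simp only [Φ, P, map_sum, map_mul, map_pow, aeval_X, Sum.elim_inl, Sum.elim_inr,
    Finset.smul_sum, smul_eq_C_mul, mul_pow]
  exact Finset.sum_congr rfl fun i _ => by ring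

lemma sum_add_pow_eq_sum_P (n m : ℕ) :
    ∑ i : Fin n, (X (Sum.inl i) + X (Sum.inr i) : MvPolynomial (Fin n ⊕ Fin n) ℝ) ^ m =
      ∑ j ∈ Finset.range (m + 1), (m.choose j : ℝ) • P n (m - j) j := by
  simp_rw [P, Finset.smul_sum, add_comm (X (Sum.inl _)), add_pow, smul_eq_C_mul, map_natCast]
  rw [Finset.sum_comm]
  exact Finset.sum_congr rfl fun j _ => Finset.sum_congr rfl fun i _ => by ring

lemma prod_Icc_pow_sub_pow_eq_zero {j k : ℕ} (hj : 1 ≤ j) (hjk : j ≤ k) :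
    ∏ l ∈ Finset.Icc 2 (k + 1), ((l : ℝ) ^ j - (l : ℝ) ^ (l - 1)) = 0 :=
  Finset.prod_eq_zero (i := j + 1) (Finset.mem_Icc.mpr ⟨by omega, by omega⟩) (by simp)

noncomputable def closedFormA (n m k : ℕ) : MvPolynomial (Fin n ⊕ Fin n) ℝ :=
  ∑ j ∈ Finset.range (m + 1),
    ((m.choose j : ℝ) * ∏ l ∈ Finset.Icc 2 (k + 1), ((l : ℝ) ^ j - (l : ℝ) ^ (l - 1))) •
      P n (m - j) j

lemma closedFormA_zero (n m : ℕ) :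
    closedFormA n m 0 = ∑ i : Fin n, (X (Sum.inl i) + X (Sum.inr i)) ^ m := by
  simp [closedFormA, sum_add_pow_eq_sum_P]

lemma closedFormA_succ (n m k : ℕ) :
    closedFormA n m (k + 1) =
      Φ n (((k + 1 : ℕ) : ℤ) + 1) (closedFormA n m k) -
        ((((k + 1 : ℕ) : ℝ) + 1) ^ (k + 1)) • closedFormA n m k := by
  simp only [closedFormA, map_sum, map_smul, Φ_P, Finset.smul_sum, ← Finset.sum_sub_distrib,
    smul_smul, ← sub_smul]
  refine Finset.sum_congr rfl fun j _ => ?_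
  rw [Finset.prod_Icc_succ_top (by omega : 2 ≤ k + 1 + 1)]
  push_cast
  ring_nf

lemma closedFormA_sub_sum_Icc_mem_Jx (n : ℕ) {m : ℕ} (hm : 1 ≤ m) (k : ℕ) :
    closedFormA n m k - ∑ j ∈ Finset.Icc (k + 1) m,
      ((m.choose j : ℝ) * ∏ l ∈ Finset.Icc 2 (k + 1), ((l : ℝ) ^ j - (l : ℝ) ^ (l - 1))) •
        P n (m - j) j ∈ Jx n := by
  have hsplit : Finset.range (m + 1) = insert 0 (Finset.Icc 1 m) := by
    ext j; simp; omega
  have hvanish : ∑ j ∈ Finset.Icc 1 m,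
      ((m.choose j : ℝ) * ∏ l ∈ Finset.Icc 2 (k + 1), ((l : ℝ) ^ j - (l : ℝ) ^ (l - 1))) •
        P n (m - j) j = ∑ j ∈ Finset.Icc (k + 1) m,
      ((m.choose j : ℝ) * ∏ l ∈ Finset.Icc 2 (k + 1), ((l : ℝ) ^ j - (l : ℝ) ^ (l - 1))) •
        P n (m - j) j := by
    refine (Finset.sum_subset (Finset.Icc_subset_Icc_left (by omega)) fun j hj hj' => ?_).symm
    simp only [Finset.mem_Icc, not_and, not_le] at hj hj'
    rw [prod_Icc_pow_sub_pow_eq_zero hj.1 (by omega), mul_zero, zero_smul]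
  rw [closedFormA, hsplit, Finset.sum_insert (by simp), hvanish, add_sub_cancel_right,
    smul_eq_C_mul]
  exact Ideal.mul_mem_left _ _ (P_mem_Jx n (by omega))

theorem stmt2_general (n : ℕ) (m : ℕ) (hm : 1 ≤ m)
    (A : ℕ → MvPolynomial (Fin n ⊕ Fin n) ℝ)
    (hA0 : A 0 = ∑ i : Fin n, (X (Sum.inl i) + X (Sum.inr i)) ^ m)
    (hArec : ∀ k : ℕ, 1 ≤ k → k ≤ m - 1 →
      A k = Φ n ((k : ℤ) + 1) (A (k - 1)) - (((k : ℝ) + 1) ^ k) • A (k - 1)) :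
    (∀ k : ℕ, k ≤ m - 1 →
      A k - ∑ j ∈ Finset.Icc (k + 1) m,
        ((m.choose j : ℝ) * ∏ l ∈ Finset.Icc 2 (k + 1), ((l : ℝ) ^ j - (l : ℝ) ^ (l - 1))) •
          P n (m - j) j ∈ Jx n) ∧
    A (m - 1) - (∏ k ∈ Finset.Icc 2 m, ((k : ℝ) ^ m - (k : ℝ) ^ (k - 1))) • P n 0 m ∈ Jx n := by
  have hA : ∀ k ≤ m - 1, A k = closedFormA n m k := by
    intro k
    induction k with
    | zero => exact fun _ => by rw [hA0, closedFormA_zero]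
    | succ k ih =>
      intro hk
      rw [hArec (k + 1) k.succ_pos hk, Nat.add_sub_cancel, ih (by omega), closedFormA_succ]
  have hJ : ∀ k ≤ m - 1, _ := fun k hk => hA k hk ▸ closedFormA_sub_sum_Icc_mem_Jx n hm k
  refine ⟨hJ, ?_⟩
  simpa [Nat.sub_add_cancel hm] using hJ (m - 1) le_rfl

/-- for `A_0 = ∑ (x_i + y_i)^m` and
`A_k = Φ^{k+1}(A_{k-1}) − (k+1)^k · A_{k-1}` (for `1 ≤ k ≤ m−1`), we have
`A_k − ∑_{j=k+1}^m C(m,j)·(∏_{l=2}^{k+1} (l^j − l^{l−1}))·P_{m−j,j} ∈ J`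
for all `0 ≤ k ≤ m−1`; in particular
`A_{m−1} − (∏_{k=2}^m (k^m − k^{k−1}))·P_{0,m} ∈ J`. -/
theorem stmt2 (n : ℕ) (hn : 1 ≤ n) (m : ℕ) (hm : 1 ≤ m)
    (A : ℕ → MvPolynomial (Fin n ⊕ Fin n) ℝ)
    (hA0 : A 0 = ∑ i : Fin n, (X (Sum.inl i) + X (Sum.inr i)) ^ m)
    (hArec : ∀ k : ℕ, 1 ≤ k → k ≤ m - 1 →
      A k = Φ n ((k : ℤ) + 1) (A (k - 1)) - (((k : ℝ) + 1) ^ k) • A (k - 1)) :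
    (∀ k : ℕ, k ≤ m - 1 →
      A k - ∑ j ∈ Finset.Icc (k + 1) m,
        ((m.choose j : ℝ) * ∏ l ∈ Finset.Icc 2 (k + 1), ((l : ℝ) ^ j - (l : ℝ) ^ (l - 1))) •
          P n (m - j) j ∈ Jx n) ∧
    A (m - 1) - (∏ k ∈ Finset.Icc 2 m, ((k : ℝ) ^ m - (k : ℝ) ^ (k - 1))) • P n 0 m ∈ Jx n :=
  stmt2_general n m hm A hA0 hArec
end

section
/- For all integers a, b ≥ 0 with 1 ≤ a + b ≤ n, the polynomial P_{a,b} lies in 𝒮 + J; that is, there exist s ∈ 𝒮 and h ∈ J with P_{a,b} = s + h. -/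
open MvPolynomial

/-- `ι : ℝ[z_1,…,z_n] → R`, `z_i ↦ x_i + y_i`. -/
noncomputable def ι (n : ℕ) :
    MvPolynomial (Fin n) ℝ →ₐ[ℝ] MvPolynomial (Fin n ⊕ Fin n) ℝ :=
  aeval (fun i => X (Sum.inl i) + X (Sum.inr i))

/-- The subalgebra `𝒮` generated by `Φ^k(q(x_1+y_1,…,x_n+y_n))` for `k ∈ ℤ \ {0}`
and `q` a symmetric polynomial. -/
noncomputable def Scal (n : ℕ) : Subalgebra ℝ (MvPolynomial (Fin n ⊕ Fin n) ℝ) :=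
  Algebra.adjoin ℝ
    {f | ∃ k : ℤ, k ≠ 0 ∧ ∃ q : MvPolynomial (Fin n) ℝ, q.IsSymmetric ∧ f = Φ n k (ι n q)}

/-! Every `P_{a,b}` already lies in `𝒮`. With `m = a + b`, the binomial theorem gives
`Φ^k(p_m(x + y)) = ∑_j C(m,j) k^j P_{m-j,j}`, so the images for `k = 1, …, m + 1` are the
vector `(C(m,j) P_{m-j,j})_j` transformed by an invertible Vandermonde matrix; inverting it
writes each `P_{m-j,j}` as an ℝ-linear combination of elements of `𝒮`. -/

theorem Submodule.mem_of_forall_sum_smul_mem {R M ι : Type*} [CommRing R] [AddCommGroup M]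
    [Module R M] [Fintype ι] [DecidableEq ι] (S : Submodule R M) {A : Matrix ι ι R}
    (hA : IsUnit A.det) {w : ι → M} (h : ∀ i, ∑ j, A i j • w j ∈ S) (j : ι) :
    w j ∈ S := by
  have hw : w j = ∑ i, A⁻¹ j i • ∑ k, A i k • w k := by
    simp_rw [Finset.smul_sum, smul_smul]
    rw [Finset.sum_comm]
    simp_rw [← Finset.sum_smul, ← Matrix.mul_apply, Matrix.nonsing_inv_mul A hA,
      Matrix.one_apply, ite_smul, one_smul, zero_smul, Finset.sum_ite_eq, Finset.mem_univ,
      if_true]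
  rw [hw]
  exact S.sum_mem fun i _ => S.smul_mem _ (h i)

theorem Submodule.mem_of_forall_sum_pow_smul_mem {K M : Type*} [Field K] [AddCommGroup M]
    [Module K M] {N : ℕ} (S : Submodule K M) {t : Fin N → K} (ht : Function.Injective t)
    {w : Fin N → M} (h : ∀ i, ∑ j : Fin N, t i ^ (j : ℕ) • w j ∈ S) (j : Fin N) :
    w j ∈ S :=
  S.mem_of_forall_sum_smul_mem
    (isUnit_iff_ne_zero.mpr (Matrix.det_vandermonde_ne_zero_iff.mpr ht)) h j

theorem Φ_ι_psum (n m : ℕ) (k : ℤ) :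
    Φ n k (ι n (psum (Fin n) ℝ m)) =
      ∑ j ∈ Finset.range (m + 1), (k : ℝ) ^ j • ((m.choose j : ℝ) • P n (m - j) j) := by
  have hX : ∀ i : Fin n,
      Φ n k (ι n (X i ^ m)) = (C (k : ℝ) * X (Sum.inr i) + X (Sum.inl i)) ^ m := fun i => by
    simp [Φ, ι, add_comm]
  simp_rw [psum, map_sum, hX, add_pow, P, Finset.smul_sum]
  rw [Finset.sum_comm]
  refine Finset.sum_congr rfl fun j _ => Finset.sum_congr rfl fun i _ => ?_
  rw [smul_smul, smul_eq_C_mul, mul_pow, ← map_pow, map_mul, map_natCast]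
  ring

theorem P_mem_Scal (n a b : ℕ) : P n a b ∈ Scal n := by
  set m := a + b
  let w : Fin (m + 1) → MvPolynomial (Fin n ⊕ Fin n) ℝ :=
    fun j => (m.choose j : ℝ) • P n (m - j) j
  have hnode : Function.Injective fun i : Fin (m + 1) => ((i : ℕ) : ℝ) + 1 :=
    fun i j hij => Fin.ext (by exact_mod_cast add_right_cancel hij)
  have hw : w ⟨b, by omega⟩ ∈ Subalgebra.toSubmodule (Scal n) := by
    refine Submodule.mem_of_forall_sum_pow_smul_mem _ hnode (fun i => ?_) _
    have hgen : Φ n ((i : ℕ) + 1) (ι n (psum (Fin n) ℝ m)) ∈ Scal n :=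
      Algebra.subset_adjoin ⟨(i : ℕ) + 1, by omega, _, psum_isSymmetric _ _ m, rfl⟩
    rw [Φ_ι_psum, ← Fin.sum_univ_eq_sum_range] at hgen
    simpa [w] using hgen
  have hchoose : (m.choose b : ℝ) ≠ 0 := by exact_mod_cast (Nat.choose_pos (by omega)).ne'
  have hP : P n a b = (m.choose b : ℝ)⁻¹ • w ⟨b, by omega⟩ := by
    simp only [w, smul_smul, inv_mul_cancel₀ hchoose, one_smul, m, Nat.add_sub_cancel]
  rw [hP]
  exact (Scal n).smul_mem hw _

theorem stmt3_general (n : ℕ) (a b : ℕ) :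
    ∃ s ∈ Scal n, ∃ h ∈ Jx n, P n a b = s + h :=
  ⟨P n a b, P_mem_Scal n a b, 0, zero_mem _, (add_zero _).symm⟩

/-- for `1 ≤ a + b ≤ n`, `P_{a,b} ∈ 𝒮 + J`. -/
theorem stmt3 (n : ℕ) (hn : 1 ≤ n) (a b : ℕ) (hab1 : 1 ≤ a + b) (hab2 : a + b ≤ n) :
    ∃ s ∈ Scal n, ∃ h ∈ Jx n, P n a b = s + h :=
  stmt3_general n a b
end

section
/- Every signed multisymmetric polynomial f ∈ R can be written in the form f = c_0 + Σ_{k=1}^m c_k · μ(x^{I_k} y^{J_k}), where c_0, c_1, …, c_m ∈ ℝ and every pair of multi-indices (I_k, J_k) is even. -/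
open MvPolynomial

/-- The action of a signed permutation `(ε, σ)` on `R = ℝ[x_1,…,x_n,y_1,…,y_n]`:
`x_i ↦ ε_i x_{σ(i)}`, `y_i ↦ ε_i y_{σ(i)}` (`x_i = X (Sum.inl i)`, `y_i = X (Sum.inr i)`). -/
noncomputable def sAct (n : ℕ) (ε : Fin n → ℤˣ) (σ : Equiv.Perm (Fin n)) :
    MvPolynomial (Fin n ⊕ Fin n) ℝ →ₐ[ℝ] MvPolynomial (Fin n ⊕ Fin n) ℝ :=
  aeval (Sum.elim (fun i => C ((ε i : ℤ) : ℝ) * X (Sum.inl (σ i)))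
                  (fun i => C ((ε i : ℤ) : ℝ) * X (Sum.inr (σ i))))

/-- The symmetrization operator `μ`: the average over all `2^n·n!` signed permutations. -/
noncomputable def μop (n : ℕ) (f : MvPolynomial (Fin n ⊕ Fin n) ℝ) :
    MvPolynomial (Fin n ⊕ Fin n) ℝ :=
  (((2 ^ n * n.factorial : ℕ) : ℝ))⁻¹ •
    ∑ p : (Fin n → ℤˣ) × Equiv.Perm (Fin n), sAct n p.1 p.2 f

/-- The monomial `x^I y^J = x_1^{i_1}⋯x_n^{i_n}·y_1^{j_1}⋯y_n^{j_n}`. -/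
noncomputable def monXY (n : ℕ) (I J : Fin n → ℕ) : MvPolynomial (Fin n ⊕ Fin n) ℝ :=
  (∏ i : Fin n, X (Sum.inl i) ^ I i) * ∏ i : Fin n, X (Sum.inr i) ^ J i

/-
A signed multisymmetric `f` equals its own symmetrization `μ f`, and `μ` is linear, so expanding
`f` into monomials gives `f = ∑_d (coeff d f) · μ(x^d)`. Only even exponents survive: flipping the
sign of `x_k, y_k` multiplies the coefficient of `x^I y^J` by `(-1)^(i_k + j_k)`, so invariance
forces that coefficient to vanish when `i_k + j_k` is odd.
-/

theorem Finset.exists_fin_sum_eq {α M : Type*} [AddCommMonoid M] (S : Finset α) (g : α → M) :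
    ∃ (m : ℕ) (a : Fin m → α), (∀ k, a k ∈ S) ∧ ∑ x ∈ S, g x = ∑ k, g (a k) :=
  ⟨S.card, fun k => S.equivFin.symm k, fun k => (S.equivFin.symm k).2, by
    rw [← Finset.sum_coe_sort]
    exact (Equiv.sum_comp S.equivFin.symm (fun x => g x)).symm⟩

namespace MvPolynomial

variable {σ R : Type*} [CommSemiring R]

theorem aeval_C_mul_X_monomial (w : σ → R) (d : σ →₀ ℕ) (c : R) :
    aeval (fun s => C (w s) * X s) (monomial d c) =
      monomial d (c * d.prod fun s e => w s ^ e) := by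
  simp only [aeval_monomial, algebraMap_eq, mul_pow, ← map_pow, Finsupp.prod_mul]
  rw [← map_finsuppProd, monomial_eq, map_mul, mul_assoc]

theorem coeff_aeval_C_mul_X (w : σ → R) (f : MvPolynomial σ R) (d : σ →₀ ℕ) :
    coeff d (aeval (fun s => C (w s) * X s) f) = (d.prod fun s e => w s ^ e) * coeff d f := by
  classical
  induction f using MvPolynomial.induction_on' with
  | monomial u c =>
    rw [aeval_C_mul_X_monomial, coeff_monomial, coeff_monomial]
    split_ifs with h
    · rw [h, mul_comm]
    · rw [mul_zero]
  | add p q hp hq => rw [map_add, coeff_add, coeff_add, hp, hq, mul_add]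

end MvPolynomial

theorem sAct_one_eq_aeval (n : ℕ) (ε : Fin n → ℤˣ) :
    sAct n ε 1 = aeval fun s =>
      C (Sum.elim (fun i => ((ε i : ℤ) : ℝ)) (fun i => ((ε i : ℤ) : ℝ)) s) * X s := by
  unfold sAct
  congr 1
  ext (i | i) <;> rfl

theorem coeff_eq_zero_of_odd (n : ℕ) {f : MvPolynomial (Fin n ⊕ Fin n) ℝ} {i : Fin n}
    (hf : sAct n (Pi.mulSingle i (-1)) 1 f = f) {d : (Fin n ⊕ Fin n) →₀ ℕ}
    (hodd : Odd (d (Sum.inl i) + d (Sum.inr i))) : coeff d f = 0 := by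
  have h := congrArg (coeff d) hf
  rw [sAct_one_eq_aeval, coeff_aeval_C_mul_X, Finsupp.prod_fintype _ _ (fun _ => pow_zero _),
    Fintype.prod_sum_type] at h
  simp only [Sum.elim_inl, Sum.elim_inr, ← Finset.prod_mul_distrib, ← pow_add] at h
  rw [Finset.prod_eq_single i (fun j _ hj => by simp [hj]) (by simp)] at h
  simp [hodd.neg_one_pow] at h
  linarith

noncomputable def μopLinearMap (n : ℕ) :
    MvPolynomial (Fin n ⊕ Fin n) ℝ →ₗ[ℝ] MvPolynomial (Fin n ⊕ Fin n) ℝ :=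
  (((2 ^ n * n.factorial : ℕ) : ℝ))⁻¹ •
    ∑ p : (Fin n → ℤˣ) × Equiv.Perm (Fin n), (sAct n p.1 p.2).toLinearMap

theorem μopLinearMap_apply (n : ℕ) (f : MvPolynomial (Fin n ⊕ Fin n) ℝ) :
    μopLinearMap n f = μop n f := by
  simp [μopLinearMap, μop, LinearMap.sum_apply]

theorem monXY_eq_monomial (n : ℕ) (d : (Fin n ⊕ Fin n) →₀ ℕ) :
    monXY n (fun i => d (Sum.inl i)) (fun i => d (Sum.inr i)) = monomial d 1 := by
  rw [monomial_eq, C_1, one_mul, Finsupp.prod_fintype _ _ (fun _ => pow_zero _),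
    Fintype.prod_sum_type, monXY]

theorem μop_monomial (n : ℕ) (d : (Fin n ⊕ Fin n) →₀ ℕ) (c : ℝ) :
    μop n (monomial d c) =
      C c * μop n (monXY n (fun i => d (Sum.inl i)) (fun i => d (Sum.inr i))) := by
  rw [monXY_eq_monomial, C_mul', ← μopLinearMap_apply, ← μopLinearMap_apply, ← map_smul,
    smul_monomial, smul_eq_mul, mul_one]

theorem μop_eq_self (n : ℕ) {f : MvPolynomial (Fin n ⊕ Fin n) ℝ}
    (hf : ∀ (ε : Fin n → ℤˣ) (σ : Equiv.Perm (Fin n)), sAct n ε σ f = f) : μop n f = f := by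
  have hcard : Fintype.card ((Fin n → ℤˣ) × Equiv.Perm (Fin n)) = 2 ^ n * n.factorial := by
    simp [Fintype.card_prod, Fintype.card_perm]
  simp only [μop, hf, Finset.sum_const, Finset.card_univ, hcard, ← Nat.cast_smul_eq_nsmul ℝ,
    smul_smul]
  rw [inv_mul_cancel₀ (by positivity), one_smul]

theorem stmt10_general (n : ℕ) (f : MvPolynomial (Fin n ⊕ Fin n) ℝ)
    (hf : ∀ (ε : Fin n → ℤˣ) (σ : Equiv.Perm (Fin n)), sAct n ε σ f = f) :
    ∃ (m : ℕ) (c₀ : ℝ) (c : Fin m → ℝ) (I J : Fin m → Fin n → ℕ),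
      (∀ (k : Fin m) (i : Fin n), Even (I k i + J k i)) ∧
      f = C c₀ + ∑ k : Fin m, C (c k) * μop n (monXY n (I k) (J k)) := by
  obtain ⟨m, d, hd, hsum⟩ :=
    f.support.exists_fin_sum_eq fun d =>
      C (coeff d f) * μop n (monXY n (fun i => d (Sum.inl i)) (fun i => d (Sum.inr i)))
  refine ⟨m, 0, fun k => coeff (d k) f, fun k i => d k (Sum.inl i), fun k i => d k (Sum.inr i),
    fun k i => ?_, ?_⟩
  · by_contra hodd
    exact mem_support_iff.mp (hd k)
      (coeff_eq_zero_of_odd n (hf _ 1) (Nat.not_even_iff_odd.mp hodd))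
  · calc f = μopLinearMap n (∑ d ∈ f.support, monomial d (coeff d f)) := by
          rw [← f.as_sum, μopLinearMap_apply, μop_eq_self n hf]
      _ = _ := by simp only [map_sum, μopLinearMap_apply, μop_monomial, hsum, map_zero, zero_add]

/-- every signed multisymmetric polynomial `f` can be written as
`f = c₀ + ∑_{k=1}^m c_k·μ(x^{I_k} y^{J_k})` with every `(I_k, J_k)` even. -/
theorem stmt10 (n : ℕ) (hn : 1 ≤ n) (f : MvPolynomial (Fin n ⊕ Fin n) ℝ)
    (hf : ∀ (ε : Fin n → ℤˣ) (σ : Equiv.Perm (Fin n)), sAct n ε σ f = f) :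
    ∃ (m : ℕ) (c₀ : ℝ) (c : Fin m → ℝ) (I J : Fin m → Fin n → ℕ),
      (∀ (k : Fin m) (i : Fin n), Even (I k i + J k i)) ∧
      f = C c₀ + ∑ k : Fin m, C (c k) * μop n (monXY n (I k) (J k)) :=
  stmt10_general n f hf
end

section
/- The subring of R consisting of all signed multisymmetric polynomials is generated as an ℝ-algebra by the set {P_{a,b} : a, b ≥ 0 and a + b even}. -/
open MvPolynomial

/-!
Averaging `f` over the hyperoctahedral group kills every monomial `∏ᵢ xᵢ^{aᵢ} yᵢ^{bᵢ}` with
some `aᵢ + bᵢ` odd, since `∑_{εᵢ = ±1} εᵢ^{aᵢ+bᵢ} = 0`, and sends the others to multiples of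
augmented monomial symmetric functions `∑_{φ injective} ∏ᵢ x_{φ i}^{aᵢ} y_{φ i}^{bᵢ}`.
By induction on the number `k` of factors these lie in the algebra generated by the `P a b`
with `a + b` even: multiplying such a sum by a power sum gives the sum with `k + 1` factors
plus sums with `k` factors in which the new exponent vector is merged into an old one.
An invariant `f` equals its average.
-/

open Finset Function

section InjectiveSum

variable {R ι M : Type*} [CommRing R] [Fintype ι] [DecidableEq ι]

/-- The augmented monomial symmetric function, when `m v j` is the monomial of multidegree `v`
in the `j`-th block of variables. -/
def injSum (m : M → ι → R) {k : ℕ} (q : Fin k → M) : R :=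
  ∑ φ : Fin k → ι, if Injective φ then ∏ i, m (q i) (φ i) else 0

theorem injSum_of_fin_zero (m : M → ι → R) (q : Fin 0 → M) : injSum m q = 1 := by
  simp [injSum, injective_of_subsingleton]

theorem injSum_cons (m : M → ι → R) {k : ℕ} (v : M) (q : Fin k → M) :
    injSum m (Fin.cons v q) = ∑ ψ : Fin k → ι,
      if Injective ψ then (∑ j ∈ (univ.image ψ)ᶜ, m v j) * ∏ i, m (q i) (ψ i) else 0 := by
  rw [injSum, ← (Fin.consEquiv fun _ ↦ ι).sum_comp, Fintype.sum_prod_type, sum_comm]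
  refine sum_congr rfl fun ψ _ ↦ ?_
  simp only [show ∀ j, Fin.consEquiv (fun _ ↦ ι) (j, ψ) = Fin.cons j ψ from fun _ ↦ rfl,
    Fin.cons_injective_iff, Fin.prod_univ_succ, Fin.cons_zero, Fin.cons_succ]
  split_ifs with hψ
  · rw [sum_mul, ← sum_filter]
    exact sum_congr (by ext; simp [hψ]) fun _ _ ↦ rfl
  · simp [hψ]

theorem injSum_update_add [Add M] (m : M → ι → R) (hm : ∀ v w j, m (v + w) j = m v j * m w j)
    {k : ℕ} (q : Fin k → M) (v : M) (t : Fin k) :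
    injSum m (update q t (v + q t)) = ∑ ψ : Fin k → ι,
      if Injective ψ then m v (ψ t) * ∏ i, m (q i) (ψ i) else 0 := by
  refine sum_congr rfl fun ψ _ ↦ ?_
  split_ifs
  · rw [← mul_prod_erase _ _ (mem_univ t), ← mul_prod_erase _ _ (mem_univ t), update_self, hm,
      mul_assoc, prod_congr rfl fun i hi ↦ by rw [update_of_ne (ne_of_mem_erase hi)]]
  · rfl

/-- The index `j` of the new factor either avoids the image of `ψ`, or equals some `ψ t`. -/
theorem sum_mul_injSum [Add M] (m : M → ι → R) (hm : ∀ v w j, m (v + w) j = m v j * m w j)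
    {k : ℕ} (v : M) (q : Fin k → M) :
    (∑ j, m v j) * injSum m q =
      injSum m (Fin.cons v q) + ∑ t, injSum m (update q t (v + q t)) := by
  simp only [injSum_cons, injSum_update_add m hm]
  rw [sum_comm, ← sum_add_distrib, injSum, mul_sum]
  refine sum_congr rfl fun ψ _ ↦ ?_
  split_ifs with hψ
  · rw [← sum_mul, ← add_mul, ← sum_image hψ.injOn, sum_compl_add_sum]
  · simp

theorem injSum_mem [Add M] (m : M → ι → R) (hm : ∀ v w j, m (v + w) j = m v j * m w j)
    (S : Subring R) (T : AddSubsemigroup M) (hT : ∀ v ∈ T, ∑ j, m v j ∈ S) :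
    ∀ {k : ℕ} (q : Fin k → M), (∀ i, q i ∈ T) → injSum m q ∈ S := by
  intro k
  induction k with
  | zero => exact fun q _ ↦ injSum_of_fin_zero m q ▸ S.one_mem
  | succ k ih =>
    intro q hq
    have hq' : ∀ i, Fin.tail q i ∈ T := fun i ↦ hq i.succ
    rw [← Fin.cons_self_tail q, eq_sub_of_add_eq (sum_mul_injSum m hm _ _).symm]
    refine sub_mem (mul_mem (hT _ (hq 0)) (ih _ hq')) (sum_mem fun t _ ↦ ih _ fun i ↦ ?_)
    rcases eq_or_ne i t with rfl | hit
    · simpa using T.add_mem (hq 0) (hq' i)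
    · simpa [update_of_ne hit] using hq' i

end InjectiveSum

theorem Fintype.sum_perm_eq_sum_injective {α N : Type*} [Fintype α] [DecidableEq α]
    [AddCommMonoid N] (g : (α → α) → N) :
    ∑ σ : Equiv.Perm α, g σ = ∑ φ : α → α, if Injective φ then g φ else 0 := by
  rw [← sum_filter]
  refine sum_bij (fun σ _ ↦ ⇑σ) (by simp [Equiv.injective])
    (fun _ _ _ _ h ↦ Equiv.coe_fn_injective h)
    (fun φ hφ ↦ ⟨.ofBijective φ (mem_filter.1 hφ).2.bijective_of_finite, mem_univ _, rfl⟩)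
    fun _ _ ↦ rfl

theorem Int.cast_units_pow_of_even {R : Type*} [Ring R] (u : ℤˣ) {k : ℕ} (hk : Even k) :
    ((u : ℤ) : R) ^ k = 1 := by
  rcases Int.units_eq_one_or u with rfl | rfl <;> simp [hk.neg_one_pow]

theorem Int.sum_units_cast_pow_of_odd {R : Type*} [Ring R] {k : ℕ} (hk : Odd k) :
    ∑ u : ℤˣ, ((u : ℤ) : R) ^ k = 0 := by
  simp [UnitsInt.univ, hk.neg_one_pow]

namespace SignedMultisymmetric

def evenDegree : AddSubmonoid (ℕ × ℕ) where
  carrier := {v | Even (v.1 + v.2)}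
  add_mem' {v w} hv hw := by simpa [add_add_add_comm] using hv.add hw
  zero_mem' := ⟨0, rfl⟩

variable {n : ℕ}

noncomputable def xyPow (n : ℕ) (v : ℕ × ℕ) (j : Fin n) : MvPolynomial (Fin n ⊕ Fin n) ℝ :=
  X (Sum.inl j) ^ v.1 * X (Sum.inr j) ^ v.2

theorem xyPow_add (v w : ℕ × ℕ) (j : Fin n) :
    xyPow n (v + w) j = xyPow n v j * xyPow n w j := by
  simp only [xyPow, Prod.fst_add, Prod.snd_add, pow_add]
  ring

theorem P_eq_sum_xyPow (a b : ℕ) : P n a b = ∑ j, xyPow n (a, b) j := rfl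

theorem monomial_eq_smul_prod_xyPow (d : Fin n ⊕ Fin n →₀ ℕ) (c : ℝ) :
    monomial d c = c • ∏ i, xyPow n (d (.inl i), d (.inr i)) i := by
  rw [monomial_eq, Finsupp.prod_fintype _ _ fun _ ↦ pow_zero _, Fintype.prod_sum_type,
    ← prod_mul_distrib, smul_eq_C_mul]
  rfl

theorem sAct_xyPow (ε : Fin n → ℤˣ) (σ : Equiv.Perm (Fin n)) (v : ℕ × ℕ) (i : Fin n) :
    sAct n ε σ (xyPow n v i) = C (((ε i : ℤ) : ℝ) ^ (v.1 + v.2)) * xyPow n v (σ i) := by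
  simp only [sAct, xyPow, map_mul, map_pow, aeval_X, Sum.elim_inl, Sum.elim_inr, mul_pow,
    pow_add]
  ring

theorem sAct_P (ε : Fin n → ℤˣ) (σ : Equiv.Perm (Fin n)) {a b : ℕ} (h : Even (a + b)) :
    sAct n ε σ (P n a b) = P n a b := by
  rw [P_eq_sum_xyPow, map_sum]
  simp only [sAct_xyPow, Int.cast_units_pow_of_even _ h, map_one, one_mul]
  exact Equiv.sum_comp σ (xyPow n (a, b))

theorem sum_sAct_monomial (d : Fin n ⊕ Fin n →₀ ℕ) (c : ℝ) :
    ∑ ε, ∑ σ, sAct n ε σ (monomial d c) =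
      (c * ∏ i, ∑ u : ℤˣ, ((u : ℤ) : ℝ) ^ (d (.inl i) + d (.inr i))) •
        injSum (xyPow n) fun i ↦ (d (.inl i), d (.inr i)) := by
  simp only [monomial_eq_smul_prod_xyPow, map_smul, map_prod, sAct_xyPow, prod_mul_distrib,
    ← smul_sum, ← mul_sum, ← sum_mul]
  rw [← Fintype.prod_sum fun i (u : ℤˣ) ↦ C (((u : ℤ) : ℝ) ^ (d (.inl i) + d (.inr i))),
    Fintype.sum_perm_eq_sum_injective fun φ ↦ ∏ i, xyPow n (d (.inl i), d (.inr i)) (φ i)]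
  simp only [← map_sum, ← map_prod, ← smul_eq_C_mul, smul_smul]
  rfl

noncomputable def powerSumAlgebra (n : ℕ) : Subalgebra ℝ (MvPolynomial (Fin n ⊕ Fin n) ℝ) :=
  Algebra.adjoin ℝ {p | ∃ a b : ℕ, Even (a + b) ∧ p = P n a b}

theorem P_mem_powerSumAlgebra {a b : ℕ} (h : Even (a + b)) : P n a b ∈ powerSumAlgebra n :=
  Algebra.subset_adjoin ⟨a, b, h, rfl⟩

theorem sum_sAct_mem_powerSumAlgebra (f : MvPolynomial (Fin n ⊕ Fin n) ℝ) :
    ∑ ε, ∑ σ, sAct n ε σ f ∈ powerSumAlgebra n := by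
  induction f using MvPolynomial.induction_on' with
  | add p q hp hq => simpa only [map_add, sum_add_distrib] using add_mem hp hq
  | monomial d c =>
    rw [sum_sAct_monomial]
    by_cases h : ∀ i, Even (d (.inl i) + d (.inr i))
    · refine Subalgebra.smul_mem _ (injSum_mem (xyPow n) xyPow_add (powerSumAlgebra n).toSubring
        evenDegree.toAddSubsemigroup (fun v ↦ P_mem_powerSumAlgebra (a := v.1) (b := v.2)) _ h) _
    · obtain ⟨i, hi⟩ := not_forall.1 h
      rw [prod_eq_zero (mem_univ i) (Int.sum_units_cast_pow_of_odd (Nat.not_even_iff_odd.1 hi)),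
        mul_zero, zero_smul]
      exact zero_mem _

end SignedMultisymmetric

open SignedMultisymmetric

theorem stmt11_general (n : ℕ) (f : MvPolynomial (Fin n ⊕ Fin n) ℝ) :
    (∀ (ε : Fin n → ℤˣ) (σ : Equiv.Perm (Fin n)), sAct n ε σ f = f) ↔
    f ∈ Algebra.adjoin ℝ {p | ∃ a b : ℕ, Even (a + b) ∧ p = P n a b} := by
  constructor
  · intro hf
    set N : ℝ := Fintype.card (Fin n → ℤˣ) * Fintype.card (Equiv.Perm (Fin n))
    have hN : N ≠ 0 := by positivity
    have havg : ∑ ε, ∑ σ, sAct n ε σ f = N • f := by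
      simp only [hf, sum_const, card_univ, smul_smul, ← Nat.cast_smul_eq_nsmul ℝ, N]
    have := (powerSumAlgebra n).smul_mem (sum_sAct_mem_powerSumAlgebra f) N⁻¹
    rwa [havg, inv_smul_smul₀ hN] at this
  · intro hf ε σ
    exact Algebra.adjoin_le (S := AlgHom.equalizer (sAct n ε σ) (AlgHom.id ℝ _))
      (by rintro _ ⟨a, b, h, rfl⟩; exact sAct_P ε σ h) hf

/-- the subring of signed multisymmetric polynomials is generated as an
ℝ-algebra by `{P_{a,b} : a, b ≥ 0, a + b even}`; i.e. a polynomial is signed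
multisymmetric iff it lies in the ℝ-subalgebra generated by that set. -/
theorem stmt11 (n : ℕ) (hn : 1 ≤ n) (f : MvPolynomial (Fin n ⊕ Fin n) ℝ) :
    (∀ (ε : Fin n → ℤˣ) (σ : Equiv.Perm (Fin n)), sAct n ε σ f = f) ↔
    f ∈ Algebra.adjoin ℝ {p | ∃ a b : ℕ, Even (a + b) ∧ p = P n a b} :=
  stmt11_general n f
end
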